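/- Let A be an n-dimensional perfect evolution algebra over a field K with n ≥ 3 and natural basis B = (e_1, …, e_n). Suppose span{e_1} is an ideal of A and no proper ideal of A spanned by a subset of B has dimension greater than 1 (so span{e_1} is a maximal 1-basic ideal). Then for every index i ≠ 1, e_i² is not a scalar multiple of e_i; consequently, every permutation σ of {1, …, n} for which span{e_{σ(1)}} is an ideal of A satisfies σ(1) = 1. -/

import Mathlib

open Submodule

section EvolutionAlgebraDefs

variable {K A : Type*} [Field K] [NonUnitalNonAssocCommRing A] [Module K A]
  [SMulCommClass K A A] [IsScalarTower K A A]

/-- A *natural basis* of an evolution algebra: distinct basis vectors multiply to zero. -/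
def IsNaturalBasis {ι : Type*} (b : Module.Basis ι K A) : Prop :=
  ∀ i j : ι, i ≠ j → b i * b j = 0

/-- An *ideal* of the commutative (not necessarily associative or unital) `K`-algebra `A`:
a `K`-subspace closed under multiplication by arbitrary elements of `A`. -/
def IsEvoIdeal (I : Submodule K A) : Prop :=
  ∀ a : A, ∀ x ∈ I, a * x ∈ I

variable (K A)

/-- `A²`: the `K`-linear span of all products of elements of `A`. -/
def sqSpan : Submodule K A :=
  Submodule.span K {z : A | ∃ x y : A, z = x * y}

/-- `A` is *perfect*: `A² = A`. -/
def IsPerfectEvo : Prop := sqSpan K A = ⊤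

/-- `A` is *simple*: `A² ≠ 0` and the only ideals of `A` are `0` and `A`. -/
def IsSimpleEvo : Prop :=
  sqSpan K A ≠ ⊥ ∧ ∀ I : Submodule K A, IsEvoIdeal I → I = ⊥ ∨ I = ⊤

/-- `A` is *irreducible*: it cannot be decomposed as the direct sum of two nonzero ideals. -/
def IsIrreducibleEvo : Prop :=
  ¬ ∃ I J : Submodule K A, IsEvoIdeal I ∧ IsEvoIdeal J ∧ I ≠ ⊥ ∧ J ≠ ⊥ ∧
    I ⊓ J = ⊥ ∧ I ⊔ J = ⊤

variable {A}

/-- The smallest ideal of `A` containing `x`. -/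
def idealGenerated (x : A) : Submodule K A :=
  sInf {I : Submodule K A | IsEvoIdeal I ∧ x ∈ I}

variable {K}

/-- The structure matrix of a basis: entry `(k, i)` is the coefficient of `e k` in `(e i)²`. -/
noncomputable def structMatrix {n : ℕ} (b : Module.Basis (Fin n) K A) :
    Matrix (Fin n) (Fin n) K :=
  Matrix.of fun k i => b.repr (b i * b i) k

end EvolutionAlgebraDefs

/-- If an `n`-dimensional perfect evolution algebra (`n ≥ 3`) has a
maximal `1`-basic ideal `span {e_1}`, then for `i ≠ 1` the square `e_i²` is not a scalar
multiple of `e_i`; consequently every permutation `σ` for which `span {e_{σ 1}}` is an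
ideal fixes the index `1`. -/
theorem maximal_one_basic_ideal_perm_fixes_first
    {K A : Type*} [Field K] [NonUnitalNonAssocCommRing A] [Module K A]
    [SMulCommClass K A A] [IsScalarTower K A A]
    {n : ℕ} (hn : 3 ≤ n) (b : Module.Basis (Fin n) K A) (hb : IsNaturalBasis b)
    (hperf : IsPerfectEvo K A)
    (hI : IsEvoIdeal (Submodule.span K {b ⟨0, by omega⟩}))
    (hmax : ∀ (J : Submodule K A) (t : Set (Fin n)),
      IsEvoIdeal J → J ≠ ⊤ → J = Submodule.span K (⇑b '' t) →
        Module.finrank K ↥J ≤ 1) :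
    (∀ i : Fin n, i ≠ ⟨0, by omega⟩ → ¬ ∃ c : K, b i * b i = c • b i) ∧
      ∀ σ : Equiv.Perm (Fin n),
        IsEvoIdeal (Submodule.span K {b (σ ⟨0, by omega⟩)}) →
          σ ⟨0, by omega⟩ = ⟨0, by omega⟩ := by
  set i0 : Fin n := ⟨0, by omega⟩ with hi0
  have hmul : ∀ (a : A) (i : Fin n), a * b i = b.repr a i • (b i * b i) := by
    intro a i
    conv_lhs => rw [← b.sum_repr a]
    rw [Finset.sum_mul, Finset.sum_eq_single i]
    · rw [smul_mul_assoc]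
    · intro j _ hj; rw [smul_mul_assoc, hb j i hj, smul_zero]
    · intro h; exact absurd (Finset.mem_univ i) h
  have part1 : ∀ i : Fin n, i ≠ i0 → ¬ ∃ c : K, b i * b i = c • b i := by
    intro i hi ⟨c, hc⟩
    set J : Submodule K A := Submodule.span K (⇑b '' {i0, i}) with hJ
    have hb0J : b i0 ∈ J := subset_span ⟨i0, by simp, rfl⟩
    have hbiJ : b i ∈ J := subset_span ⟨i, by simp, rfl⟩
    have hideal : ∀ a : A, ∀ x ∈ J, a * x ∈ J := by
      intro a x hx
      induction hx using span_induction with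
      | mem z hz =>
        obtain ⟨j, hj, rfl⟩ := hz
        rcases hj with rfl | rfl
        · exact span_le.mpr (Set.singleton_subset_iff.mpr hb0J)
            (hI a (b i0) (mem_span_singleton_self _))
        · rw [hmul, hc]
          exact smul_mem _ _ (smul_mem _ _ hbiJ)
      | zero => simp only [mul_zero]; exact zero_mem J
      | add x y hx hy px py => rw [mul_add]; exact add_mem px py
      | smul r x hx px => rw [mul_smul_comm]; exact smul_mem _ _ px
    -- pick j distinct from i0 and i
    have h1 : (1 : ℕ) < n := by omega
    have h2 : (2 : ℕ) < n := by omega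
    set j : Fin n := if i = ⟨1, h1⟩ then ⟨2, h2⟩ else ⟨1, h1⟩ with hj
    have hji0 : j ≠ i0 := by
      rw [hj]; split_ifs <;> simp [hi0, Fin.ext_iff]
    have hji : j ≠ i := by
      rw [hj]; split_ifs with h
      · rw [h]; simp [Fin.ext_iff]
      · exact fun e => h e.symm
    have hnot : b j ∉ J := by
      apply b.linearIndependent.notMem_span_image
      simp [hji0, hji]
    have hJtop : J ≠ ⊤ := fun h => hnot (h ▸ trivial)
    have hle := hmax J {i0, i} hideal hJtop hJ
    -- but J contains two linearly independent vectors
    haveI : Module.Finite K A := Module.Finite.of_basis b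
    obtain ⟨v, hv⟩ := finrank_le_one_iff.mp hle
    obtain ⟨c, hc0⟩ := hv ⟨b i0, hb0J⟩
    obtain ⟨d, hd0⟩ := hv ⟨b i, hbiJ⟩
    have hc0' : c • (v : A) = b i0 := congrArg Subtype.val hc0
    have hd0' : d • (v : A) = b i := congrArg Subtype.val hd0
    have hcne : c ≠ 0 := by
      rintro rfl
      exact b.ne_zero i0 (by rw [← hc0', zero_smul])
    have he : b i = (d * c⁻¹) • b i0 := by
      rw [← hd0', ← hc0', smul_smul, mul_assoc, inv_mul_cancel₀ hcne, mul_one]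
    have hrep := congrArg (fun x => b.repr x i) he
    simp only [Module.Basis.repr_self, map_smul, Finsupp.smul_apply,
      Finsupp.single_eq_same, Finsupp.single_eq_of_ne hi, smul_zero] at hrep
    exact one_ne_zero hrep
  refine ⟨part1, fun σ hσ => ?_⟩
  by_contra h
  obtain ⟨c, hc⟩ := mem_span_singleton.mp
    (hσ (b (σ i0)) (b (σ i0)) (mem_span_singleton_self _))
  exact part1 _ h ⟨c, hc.symm⟩
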